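/- For each k ≥ 1 and x ∈ (0,1), the principal-value integral ∫₀¹ (φ_k(y) − φ_k(x)) ν(x,y) dy equals −kπ φ_k(x), where φ_k(y) = √2 cos(kπy) and ν(x,y) = (π/2)[1/(1−cos(π(x−y))) + 1/(1−cos(π(x+y)))]. That is, the integral operator with kernel ν coincides with the spectral operator I on the Neumann eigenfunctions. -/

import Mathlib

/-!
`ν(x, ·)` is the `y`-derivative of `K(y) = sin (π y) / (cos (π y) - cos (π x))`. Integrating
by parts on `(0,1) \ (x - δ, x + δ)`, the boundary terms vanish at `0` and `1` (where
`sin (π y) = 0`) and cancel at `x ± δ` as `δ → 0` (since `(φ(y) - φ(x)) K(y)` has a removable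
singularity at `x`), leaving `-PV ∫₀¹ φ' K`. With `sin (kθ) sin θ = (cos ((k-1)θ) -
cos ((k+1)θ)) / 2` this reduces to Glauert's integrals
`PV ∫₀¹ cos (nπy) / (cos (πy) - cos (πx)) dy = sin (nπx) / sin (πx)`, which follow from
`cos ((n+2)θ) = 2 cos θ cos ((n+1)θ) - cos (nθ)` once the cases `n = 0` (an explicit
logarithmic antiderivative) and `n = 1` are known.
-/

open Real Set MeasureTheory

/-- The singular integral kernel representing the operator `I` on `(0,1)`. -/
noncomputable def nuKer (x y : ℝ) : ℝ :=
  Real.pi / 2 * (1 / (1 - Real.cos (Real.pi * (x - y)))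
    + 1 / (1 - Real.cos (Real.pi * (x + y))))

open Filter Topology

lemma one_sub_cos_sub_mul_one_sub_cos_add (a b : ℝ) :
    (1 - cos (a - b)) * (1 - cos (a + b)) = (cos b - cos a) ^ 2 := by
  rw [cos_sub, cos_add]
  linear_combination (-sin b ^ 2) * sin_sq a + (cos a ^ 2 - 1) * sin_sq b

section Kernel

variable {x y : ℝ}

lemma one_sub_cos_ne_zero_of_cos_ne (h : cos (π * y) ≠ cos (π * x)) :
    1 - cos (π * (x - y)) ≠ 0 ∧ 1 - cos (π * (x + y)) ≠ 0 := by
  have hD : (cos (π * y) - cos (π * x)) ^ 2 ≠ 0 := pow_ne_zero 2 (sub_ne_zero.mpr h)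
  rw [← one_sub_cos_sub_mul_one_sub_cos_add, ← mul_sub, ← mul_add] at hD
  exact mul_ne_zero_iff.mp hD

lemma nuKer_eq (h : cos (π * y) ≠ cos (π * x)) :
    nuKer x y = π * (1 - cos (π * x) * cos (π * y)) / (cos (π * y) - cos (π * x)) ^ 2 := by
  obtain ⟨h₁, h₂⟩ := one_sub_cos_ne_zero_of_cos_ne h
  rw [nuKer, ← one_sub_cos_sub_mul_one_sub_cos_add, ← mul_sub, ← mul_add]
  field_simp
  rw [mul_sub, mul_add, cos_sub, cos_add]
  ring

lemma continuousOn_nuKer : ContinuousOn (nuKer x) {y | cos (π * y) ≠ cos (π * x)} := by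
  unfold nuKer
  exact continuousOn_const.mul (.add
    (continuousOn_const.div (by fun_prop) fun y hy => (one_sub_cos_ne_zero_of_cos_ne hy).1)
    (continuousOn_const.div (by fun_prop) fun y hy => (one_sub_cos_ne_zero_of_cos_ne hy).2))

lemma hasDerivAt_sin_div_cos_sub_cos (h : cos (π * y) ≠ cos (π * x)) :
    HasDerivAt (fun z => sin (π * z) / (cos (π * z) - cos (π * x))) (nuKer x y) y := by
  have hD : cos (π * y) - cos (π * x) ≠ 0 := sub_ne_zero.mpr h
  have hlin : HasDerivAt (fun z => π * z) π y := by simpa using (hasDerivAt_id y).const_mul π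
  refine (hlin.sin.div (hlin.cos.sub_const (cos (π * x))) hD).congr_deriv ?_
  rw [nuKer_eq h]
  field_simp
  linear_combination sin_sq_add_cos_sq (π * y)

end Kernel

def pvDomain (x δ : ℝ) : Set ℝ := {y | y ∈ Ioo 0 1 ∧ δ ≤ |y - x|}

def HasPVIntegral (f : ℝ → ℝ) (x L : ℝ) : Prop :=
  Tendsto (fun δ => ∫ y in pvDomain x δ, f y) (𝓝[>] 0) (𝓝 L)

section PrincipalValue

variable {f g F : ℝ → ℝ} {x δ a b : ℝ}

lemma Icc_inter_le_abs_subset (hδ : 0 < δ) : Icc 0 1 ∩ {y | δ ≤ |y - x|} ⊆ Icc 0 1 \ {x} := by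
  rintro y ⟨hy, hyx⟩
  exact ⟨hy, fun h => hδ.not_ge (by simpa [mem_singleton_iff.mp h] using hyx)⟩

lemma pvDomain_subset_Icc_inter : pvDomain x δ ⊆ Icc 0 1 ∩ {y | δ ≤ |y - x|} :=
  fun _ hy => ⟨Ioo_subset_Icc_self hy.1, hy.2⟩

lemma measurableSet_pvDomain : MeasurableSet (pvDomain x δ) :=
  measurableSet_Ioo.inter (measurableSet_le measurable_const (measurable_id.sub_const x).abs)

lemma integrableOn_pvDomain (hf : ContinuousOn f (Icc 0 1 \ {x})) (hδ : 0 < δ) :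
    IntegrableOn f (pvDomain x δ) :=
  ((hf.mono (Icc_inter_le_abs_subset hδ)).integrableOn_compact
    (isCompact_Icc.inter_right (isClosed_le continuous_const (by fun_prop)))).mono_set
    pvDomain_subset_Icc_inter

lemma pvDomain_eq_union (hδ : 0 < δ) (hδx : δ ≤ x) (hδx' : δ ≤ 1 - x) :
    pvDomain x δ = Ioc 0 (x - δ) ∪ Ico (x + δ) 1 := by
  ext y
  simp only [pvDomain, mem_ofPred_eq, mem_Ioo, mem_union, mem_Ioc, mem_Ico, le_abs]
  constructor
  · rintro ⟨⟨h0, h1⟩, h | h⟩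
    · exact .inr ⟨by linarith, h1⟩
    · exact .inl ⟨h0, by linarith⟩
  · rintro (⟨h0, h1⟩ | ⟨h0, h1⟩)
    · exact ⟨⟨h0, by linarith⟩, .inr (by linarith)⟩
    · exact ⟨⟨by linarith, h1⟩, .inl (by linarith)⟩

lemma setIntegral_pvDomain_of_hasDerivAt (hF : ∀ y ∈ Icc 0 1 \ {x}, HasDerivAt F (f y) y)
    (hf : ContinuousOn f (Icc 0 1 \ {x})) (hδ : 0 < δ) (hδx : δ ≤ x) (hδx' : δ ≤ 1 - x) :
    ∫ y in pvDomain x δ, f y = F 1 - F 0 + (F (x - δ) - F (x + δ)) := by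
  have hL : Icc 0 (x - δ) ⊆ Icc 0 1 \ {x} := fun y hy =>
    ⟨⟨hy.1, by linarith [hy.2]⟩, fun h => by linarith [hy.2, mem_singleton_iff.mp h]⟩
  have hR : Icc (x + δ) 1 ⊆ Icc 0 1 \ {x} := fun y hy =>
    ⟨⟨by linarith [hy.1], hy.2⟩, fun h => by linarith [hy.1, mem_singleton_iff.mp h]⟩
  have hdisj : Disjoint (Ioc 0 (x - δ)) (Ico (x + δ) 1) :=
    disjoint_left.mpr fun y h₁ h₂ => by linarith [h₁.2, h₂.1]
  rw [pvDomain_eq_union hδ hδx hδx', setIntegral_union hdisj measurableSet_Ico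
    ((hf.mono hL).integrableOn_Icc.mono_set Ioc_subset_Icc_self)
    ((hf.mono hR).integrableOn_Icc.mono_set Ico_subset_Icc_self),
    integral_Ico_eq_integral_Ioo, ← integral_Ioc_eq_integral_Ioo,
    ← intervalIntegral.integral_of_le (by linarith),
    ← intervalIntegral.integral_of_le (by linarith),
    intervalIntegral.integral_eq_sub_of_hasDerivAt
      (fun y hy => hF y (hL (uIcc_of_le (by linarith : (0 : ℝ) ≤ x - δ) ▸ hy)))
      ((hf.mono hL).intervalIntegrable_of_Icc (by linarith)),
    intervalIntegral.integral_eq_sub_of_hasDerivAt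
      (fun y hy => hF y (hR (uIcc_of_le (by linarith : x + δ ≤ 1) ▸ hy)))
      ((hf.mono hR).intervalIntegrable_of_Icc (by linarith))]
  ring

lemma HasPVIntegral.of_hasDerivAt (hF : ∀ y ∈ Icc 0 1 \ {x}, HasDerivAt F (f y) y)
    (hf : ContinuousOn f (Icc 0 1 \ {x})) (hx : x ∈ Ioo 0 1)
    (hlim : Tendsto (fun δ => F (x - δ) - F (x + δ)) (𝓝[>] 0) (𝓝 a)) :
    HasPVIntegral f x (F 1 - F 0 + a) := by
  have hsmall : Ioo 0 (min x (1 - x)) ∈ 𝓝[>] (0 : ℝ) :=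
    Ioo_mem_nhdsGT (lt_min hx.1 (by linarith [hx.2]))
  refine (tendsto_const_nhds.add hlim).congr' (eventuallyEq_of_mem hsmall fun δ hδ => ?_)
  exact (setIntegral_pvDomain_of_hasDerivAt hF hf hδ.1 (hδ.2.le.trans (min_le_left _ _))
    (hδ.2.le.trans (min_le_right _ _))).symm

lemma tendsto_sub_sub_add_of_tendsto_nhdsNE {c : ℝ} (hF : Tendsto F (𝓝[≠] x) (𝓝 c)) :
    Tendsto (fun δ => F (x - δ) - F (x + δ)) (𝓝[>] 0) (𝓝 0) := by
  have hshift : ∀ s : ℝ, s ≠ 0 → Tendsto (fun δ => x + s * δ) (𝓝[>] 0) (𝓝[≠] x) := fun s hs =>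
    tendsto_nhdsWithin_iff.mpr
      ⟨(Continuous.tendsto' (by fun_prop) 0 x (by simp)).mono_left nhdsWithin_le_nhds,
        eventually_nhdsWithin_of_forall fun δ (hδ : 0 < δ) => by simp [hs, hδ.ne']⟩
  simpa [sub_eq_add_neg] using
    (hF.comp (hshift (-1) (by norm_num))).sub (hF.comp (hshift 1 one_ne_zero))

lemma HasPVIntegral.of_hasDerivAt_of_continuous (hF : ∀ y, HasDerivAt F (f y) y)
    (hf : Continuous f) (hx : x ∈ Ioo 0 1) : HasPVIntegral f x (F 1 - F 0) := by
  have hFc : ContinuousAt F x := (hF x).continuousAt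
  simpa using HasPVIntegral.of_hasDerivAt (fun y _ => hF y) hf.continuousOn hx
    (tendsto_sub_sub_add_of_tendsto_nhdsNE (hFc.tendsto.mono_left nhdsWithin_le_nhds))

lemma HasPVIntegral.add (hf : HasPVIntegral f x a) (hg : HasPVIntegral g x b)
    (hfc : ContinuousOn f (Icc 0 1 \ {x})) (hgc : ContinuousOn g (Icc 0 1 \ {x})) :
    HasPVIntegral (fun y => f y + g y) x (a + b) :=
  (Tendsto.add hf hg).congr' (eventually_nhdsWithin_of_forall fun _ hδ =>
    (integral_add (integrableOn_pvDomain hfc hδ) (integrableOn_pvDomain hgc hδ)).symm)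

lemma HasPVIntegral.sub (hf : HasPVIntegral f x a) (hg : HasPVIntegral g x b)
    (hfc : ContinuousOn f (Icc 0 1 \ {x})) (hgc : ContinuousOn g (Icc 0 1 \ {x})) :
    HasPVIntegral (fun y => f y - g y) x (a - b) :=
  (Tendsto.sub hf hg).congr' (eventually_nhdsWithin_of_forall fun _ hδ =>
    (integral_sub (integrableOn_pvDomain hfc hδ) (integrableOn_pvDomain hgc hδ)).symm)

lemma HasPVIntegral.const_mul (c : ℝ) (hf : HasPVIntegral f x a) :
    HasPVIntegral (fun y => c * f y) x (c * a) :=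
  (Tendsto.const_mul c hf).congr fun _ => (integral_const_mul c _).symm

lemma HasPVIntegral.congr (hf : HasPVIntegral f x a) (hfg : EqOn f g (Icc 0 1 \ {x})) :
    HasPVIntegral g x a :=
  hf.congr' (eventually_nhdsWithin_of_forall fun _ hδ =>
    setIntegral_congr_fun measurableSet_pvDomain
      (hfg.mono (pvDomain_subset_Icc_inter.trans (Icc_inter_le_abs_subset hδ))))

end PrincipalValue

section Glauert

variable {x y : ℝ}

lemma cos_pi_mul_ne_of_mem (hx : x ∈ Icc 0 1) (hy : y ∈ Icc 0 1 \ {x}) :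
    cos (π * y) ≠ cos (π * x) := by
  have hmem : ∀ t ∈ Icc (0 : ℝ) 1, π * t ∈ Icc 0 π := fun t ht =>
    ⟨mul_nonneg pi_pos.le ht.1, mul_le_of_le_one_right pi_pos.le ht.2⟩
  exact fun h => hy.2 (mul_left_cancel₀ pi_ne_zero (injOn_cos (hmem y hy.1) (hmem x hx) h))

lemma continuousOn_div_cos_sub_cos (hx : x ∈ Icc 0 1) {g : ℝ → ℝ} (hg : Continuous g) :
    ContinuousOn (fun y => g y / (cos (π * y) - cos (π * x))) (Icc 0 1 \ {x}) :=
  hg.continuousOn.div (by fun_prop) fun _ hy => sub_ne_zero.mpr (cos_pi_mul_ne_of_mem hx hy)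

lemma hasDerivAt_log_sin_sub_log_sin (hx : sin (π * x) ≠ 0) (h : cos (π * y) ≠ cos (π * x)) :
    HasDerivAt
      (fun z => (log (sin (π * (z + x) / 2)) - log (sin (π * (z - x) / 2))) / (π * sin (π * x)))
      (1 / (cos (π * y) - cos (π * x))) y := by
  set u := π * (y + x) / 2
  set v := π * (y - x) / 2
  have hprod : sin u * sin v = (cos (π * x) - cos (π * y)) / 2 := by
    rw [show π * x = u - v by ring, show π * y = u + v by ring, cos_sub, cos_add]; ring
  have huv : sin u * sin v ≠ 0 := by
    rw [hprod]; exact div_ne_zero (sub_ne_zero.mpr h.symm) two_ne_zero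
  obtain ⟨hu, hv⟩ := mul_ne_zero_iff.mp huv
  have hlin : ∀ c : ℝ, HasDerivAt (fun z => π * (z + c) / 2) (π / 2) y := fun c => by
    simpa using (((hasDerivAt_id y).add_const c).const_mul π).div_const 2
  refine ((((hlin x).sin.log hu).sub ((hlin (-x)).sin.log hv)).div_const _).congr_deriv ?_
  have hD : cos (π * y) - cos (π * x) = -(2 * (sin u * sin v)) := by rw [hprod]; ring
  simp only [← sub_eq_add_neg]
  rw [show π * (y + x) / 2 = u from rfl, show π * (y - x) / 2 = v from rfl, hD]
  rw [show π * x = u - v by ring, sin_sub] at hx ⊢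
  field_simp
  ring

lemma sin_pi_mul_pos (hx : x ∈ Ioo 0 1) : 0 < sin (π * x) :=
  sin_pos_of_pos_of_lt_pi (mul_pos pi_pos hx.1) (mul_lt_of_lt_one_right pi_pos hx.2)

lemma hasPVIntegral_one_div_cos_sub_cos (hx : x ∈ Ioo 0 1) :
    HasPVIntegral (fun y => 1 / (cos (π * y) - cos (π * x))) x 0 := by
  have hsx := (sin_pi_mul_pos hx).ne'
  have hxI : x ∈ Icc 0 1 := Ioo_subset_Icc_self hx
  set c := π * sin (π * x)
  set L : ℝ → ℝ := fun z => log (sin (π * (z + x) / 2))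
  -- `log |sin (π (z - x) / 2)|` is even about `x`, so only `L` survives in the symmetric difference
  have hsymm : ∀ δ, (L (x - δ) - log (sin (π * (x - δ - x) / 2))) / c
      - (L (x + δ) - log (sin (π * (x + δ - x) / 2))) / c = (L (x - δ) - L (x + δ)) / c := by
    intro δ
    rw [show π * (x - δ - x) / 2 = -(π * (x + δ - x) / 2) by ring, sin_neg, log_neg_eq_log]
    ring
  have hL : ContinuousAt L x := by
    refine ContinuousAt.log (by fun_prop) ?_
    rwa [show π * (x + x) / 2 = π * x by ring]
  have hlim := (tendsto_sub_sub_add_of_tendsto_nhdsNE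
    (hL.tendsto.mono_left nhdsWithin_le_nhds)).div_const c
  rw [zero_div] at hlim
  convert HasPVIntegral.of_hasDerivAt
    (fun y hy => hasDerivAt_log_sin_sub_log_sin hsx (cos_pi_mul_ne_of_mem hxI hy))
    (continuousOn_div_cos_sub_cos hxI continuous_const) hx (hlim.congr fun δ => (hsymm δ).symm)
    using 1
  rw [show π * (1 + x) / 2 = π - π * (1 - x) / 2 by ring, sin_pi_sub,
    show π * (0 - x) / 2 = -(π * (0 + x) / 2) by ring, sin_neg, log_neg_eq_log]
  simp

lemma hasPVIntegral_cos_nat_succ_mul (hx : x ∈ Ioo 0 1) (n : ℕ) :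
    HasPVIntegral (fun y => cos ((n + 1) * π * y)) x 0 := by
  have hn : ((n : ℝ) + 1) * π ≠ 0 := by positivity
  have hF : ∀ y, HasDerivAt (fun z => sin ((n + 1) * π * z) / ((n + 1) * π))
      (cos ((n + 1) * π * y)) y := fun y =>
    ((((hasDerivAt_id' y).const_mul (((n : ℝ) + 1) * π)).sin).div_const _).congr_deriv
      (by field_simp [hn])
  convert HasPVIntegral.of_hasDerivAt_of_continuous hF (by fun_prop) hx using 1
  rw [show ((n : ℝ) + 1) * π * 1 = ((n + 1 : ℕ) : ℝ) * π by push_cast; ring, sin_nat_mul_pi]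
  simp

lemma hasPVIntegral_one (hx : x ∈ Ioo 0 1) : HasPVIntegral (fun _ => 1) x 1 := by
  simpa using HasPVIntegral.of_hasDerivAt_of_continuous (fun y => hasDerivAt_id y)
    continuous_const hx

/-- Glauert's integral. -/
lemma hasPVIntegral_cos_div_cos_sub_cos (hx : x ∈ Ioo 0 1) (n : ℕ) :
    HasPVIntegral (fun y => cos (n * π * y) / (cos (π * y) - cos (π * x))) x
      (sin (n * π * x) / sin (π * x)) := by
  have hsx := (sin_pi_mul_pos hx).ne'
  have hxI : x ∈ Icc 0 1 := Ioo_subset_Icc_self hx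
  have hD : ∀ y ∈ Icc 0 1 \ {x}, cos (π * y) - cos (π * x) ≠ 0 := fun y hy =>
    sub_ne_zero.mpr (cos_pi_mul_ne_of_mem hxI hy)
  have hcont : ∀ n : ℕ, ContinuousOn (fun y => cos (n * π * y) / (cos (π * y) - cos (π * x)))
      (Icc 0 1 \ {x}) := fun n => continuousOn_div_cos_sub_cos hxI (by fun_prop)
  induction n using Nat.twoStepInduction with
  | zero => simpa using hasPVIntegral_one_div_cos_sub_cos hx
  | one =>
    -- `cos (π y) / D = 1 + cos (π x) / D` with `D = cos (π y) - cos (π x)`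
    have h := (hasPVIntegral_one hx).add ((hasPVIntegral_one_div_cos_sub_cos hx).const_mul
      (cos (π * x))) continuousOn_const
      ((continuousOn_div_cos_sub_cos hxI continuous_const).const_mul _)
    convert h.congr fun y hy => ?_ using 1
    · simp [hsx]
    · rw [Nat.cast_one, one_mul]
      field_simp [hD y hy]
      ring
  | more n hn hn1 =>
    -- `cos ((n + 2) θ) = 2 cos θ cos ((n + 1) θ) - cos (n θ)`, and `cos θ = D + cos (π x)`
    have h := (((hasPVIntegral_cos_nat_succ_mul hx n).const_mul 2).add
      (hn1.const_mul (2 * cos (π * x))) (by fun_prop) ((hcont _).const_mul _)).sub hn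
      (by fun_prop) (hcont n)
    convert h.congr fun y hy => ?_ using 1
    · push_cast
      rw [show ((n : ℝ) + 2) * π * x = (n + 1) * π * x + π * x by ring,
        show (n : ℝ) * π * x = (n + 1) * π * x - π * x by ring, sin_add, sin_sub]
      field_simp
      ring
    · push_cast
      rw [show ((n : ℝ) + 2) * π * y = (n + 1) * π * y + π * y by ring,
        show (n : ℝ) * π * y = (n + 1) * π * y - π * y by ring, cos_add, cos_sub]
      field_simp [hD y hy]
      ring

end Glauert

lemma tendsto_sub_div_sub_nhdsNE {u v : ℝ → ℝ} {u' v' x : ℝ} (hu : HasDerivAt u u' x)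
    (hv : HasDerivAt v v' x) (hv' : v' ≠ 0) :
    Tendsto (fun z => (u z - u x) / (v z - v x)) (𝓝[≠] x) (𝓝 (u' / v')) := by
  refine ((hasDerivAt_iff_tendsto_slope.mp hu).div (hasDerivAt_iff_tendsto_slope.mp hv)
    hv').congr' (eventually_nhdsWithin_of_forall fun z hz => ?_)
  simp only [Pi.div_apply, slope_def_field]
  exact div_div_div_cancel_right₀ (sub_ne_zero.mpr hz) _ _

/-- Integration by parts against `ν(x, ·) = ∂_y (sin (π y) / (cos (π y) - cos (π x)))`. -/
lemma hasPVIntegral_sub_mul_nuKer {φ φ' : ℝ → ℝ} {x L : ℝ} (hx : x ∈ Ioo 0 1)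
    (hφ : ∀ y, HasDerivAt φ (φ' y) y) (hφ' : Continuous φ')
    (h : HasPVIntegral (fun y => φ' y * sin (π * y) / (cos (π * y) - cos (π * x))) x L) :
    HasPVIntegral (fun y => (φ y - φ x) * nuKer x y) x (-L) := by
  have hxI : x ∈ Icc 0 1 := Ioo_subset_Icc_self hx
  have hφc : Continuous φ := continuous_iff_continuousAt.mpr fun y => (hφ y).continuousAt
  set K := fun y => sin (π * y) / (cos (π * y) - cos (π * x))
  have hKc : ContinuousOn K (Icc 0 1 \ {x}) := continuousOn_div_cos_sub_cos hxI (by fun_prop)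
  have hνc : ContinuousOn (nuKer x) (Icc 0 1 \ {x}) :=
    continuousOn_nuKer.mono fun y hy => cos_pi_mul_ne_of_mem hxI hy
  have hG : ∀ y ∈ Icc 0 1 \ {x}, HasDerivAt (fun z => (φ z - φ x) * K z)
      (φ' y * K y + (φ y - φ x) * nuKer x y) y := fun y hy =>
    (((hφ y).sub_const _).mul (hasDerivAt_sin_div_cos_sub_cos
      (cos_pi_mul_ne_of_mem hxI hy))).congr_deriv (by ring)
  have hcos : HasDerivAt (fun z => cos (π * z)) (-sin (π * x) * π) x := by
    simpa using ((hasDerivAt_id x).const_mul π).cos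
  have hsin : Tendsto (fun z => sin (π * z)) (𝓝[≠] x) (𝓝 (sin (π * x))) :=
    (Continuous.tendsto (by fun_prop) x).mono_left nhdsWithin_le_nhds
  have hGlim : Tendsto (fun z => (φ z - φ x) * K z) (𝓝[≠] x)
      (𝓝 (φ' x / (-sin (π * x) * π) * sin (π * x))) :=
    ((tendsto_sub_div_sub_nhdsNE (hφ x) hcos
      (mul_ne_zero (neg_ne_zero.mpr (sin_pi_mul_pos hx).ne') pi_ne_zero)).mul hsin).congr
      fun z => by simp only [K]; ring
  have hparts := HasPVIntegral.of_hasDerivAt hG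
    ((hφ'.continuousOn.mul hKc).add ((hφc.continuousOn.sub continuousOn_const).mul hνc)) hx
    (tendsto_sub_sub_add_of_tendsto_nhdsNE hGlim)
  convert hparts.sub h ((hφ'.continuousOn.mul hKc).add
    ((hφc.continuousOn.sub continuousOn_const).mul hνc))
    (continuousOn_div_cos_sub_cos hxI (by fun_prop)) |>.congr fun y _ => ?_ using 1
  · simp [K]
  · simp only [K]; ring

lemma hasPVIntegral_sin_mul_sin_div {x : ℝ} (hx : x ∈ Ioo 0 1) {k : ℕ} (hk : 1 ≤ k) :
    HasPVIntegral (fun y => sin (k * π * y) * sin (π * y) / (cos (π * y) - cos (π * x))) x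
      (-cos (k * π * x)) := by
  obtain ⟨m, rfl⟩ := Nat.exists_eq_add_of_le' hk
  have hxI : x ∈ Icc 0 1 := Ioo_subset_Icc_self hx
  have h := ((hasPVIntegral_cos_div_cos_sub_cos hx m).sub (hasPVIntegral_cos_div_cos_sub_cos hx
    (m + 2)) (continuousOn_div_cos_sub_cos hxI (by fun_prop))
    (continuousOn_div_cos_sub_cos hxI (by fun_prop))).const_mul (1 / 2)
  convert h.congr fun y _ => ?_ using 1
  · push_cast
    rw [show ((m : ℝ) + 2) * π * x = (m + 1) * π * x + π * x by ring,
      show (m : ℝ) * π * x = (m + 1) * π * x - π * x by ring, sin_add, sin_sub]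
    field_simp [(sin_pi_mul_pos hx).ne']
    ring
  · push_cast
    rw [show ((m : ℝ) + 2) * π * y = (m + 1) * π * y + π * y by ring,
      show (m : ℝ) * π * y = (m + 1) * π * y - π * y by ring, cos_add, cos_sub]
    ring

/-- The integral operator with kernel `ν` coincides with the spectral operator `I`
on the Neumann eigenfunctions: the principal value of
`∫₀¹ (φ_k(y) − φ_k(x)) ν(x,y) dy` equals `−kπ φ_k(x)`. -/
theorem stmt16 (k : ℕ) (hk : 1 ≤ k) (x : ℝ) (hx : x ∈ Ioo (0:ℝ) 1) :
    Filter.Tendsto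
      (fun δ : ℝ => ∫ y in {y : ℝ | y ∈ Ioo (0:ℝ) 1 ∧ δ ≤ |y - x|},
        (Real.sqrt 2 * Real.cos (k * Real.pi * y)
          - Real.sqrt 2 * Real.cos (k * Real.pi * x)) * nuKer x y)
      (nhdsWithin 0 (Ioi 0))
      (nhds (-(k * Real.pi) * (Real.sqrt 2 * Real.cos (k * Real.pi * x)))) := by
  have hφ : ∀ y, HasDerivAt (fun z => √2 * cos (k * π * z))
      (-(√2 * (k * π)) * sin (k * π * y)) y :=
    fun y => ((((hasDerivAt_id' y).const_mul (k * π)).cos).const_mul √2).congr_deriv (by ring)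
  have h := hasPVIntegral_sub_mul_nuKer hx hφ (by fun_prop)
    (((hasPVIntegral_sin_mul_sin_div hx hk).const_mul (-(√2 * (k * π)))).congr fun y _ => by ring)
  rw [show -(k * π) * (√2 * cos (k * π * x)) = -(-(√2 * (k * π)) * -cos (k * π * x)) by ring]
  exact h
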